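/- If additionally the scores s₁,...,s_{n+1} are almost surely distinct, then the coverage probability P(s_{n+1} ≤ τ*) is at most 1 - α + 1/(n+1). -/

import Mathlib

open MeasureTheory

/-- The `k`-th smallest value (1-indexed) among the entries of `v`. -/
noncomputable def kthSmallest {n : ℕ} (v : Fin n → ℝ) (k : ℕ) : ℝ :=
  (((List.ofFn v).insertionSort (· ≤ ·)).getD (k - 1) 0)

open Finset Function ENNReal

/-!
Almost surely the `n + 1` scores are distinct, so their ranks are a permutation of
`1, …, n + 1`. Exchangeability makes the probability that a given score has rank `r` the same
for all scores, hence the rank of the test score is uniform on `{1, …, n + 1}`. The test score is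
at most the `k`-th smallest calibration score exactly when its rank is at most `k`, which has
probability `k / (n + 1)`, and `k = ⌈(1 - α)(n + 1)⌉ < (1 - α)(n + 1) + 1`.
-/

theorem List.Pairwise.le_getElem_iff_countP_lt_le {α : Type*} [LinearOrder α] {l : List α}
    (hl : l.Pairwise (· ≤ ·)) (c : α) {i : ℕ} (hi : i < l.length) :
    c ≤ l[i] ↔ l.countP (· < c) ≤ i := by
  have mono {j j' : ℕ} (hj : j ≤ j') (hj' : j' < l.length) : l[j] ≤ l[j'] :=
    hl.rel_get_of_le (a := ⟨j, hj.trans_lt hj'⟩) (b := ⟨j', hj'⟩) hj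
  constructor
  · intro h
    have hdrop : (l.drop i).countP (· < c) = 0 := by
      refine List.countP_eq_zero.2 fun a ha => ?_
      obtain ⟨j, hj, rfl⟩ := List.mem_drop_iff_getElem.1 ha
      simpa using h.trans (mono (Nat.le_add_right i j) (by omega))
    calc l.countP (· < c) = (l.take i).countP (· < c) + (l.drop i).countP (· < c) := by
          rw [← List.countP_append, List.take_append_drop]
      _ ≤ i := by
          rw [hdrop, add_zero]
          exact List.countP_le_length.trans (List.length_take_le _ _)
  · intro h
    by_contra! hlt
    have htake : (l.take (i + 1)).countP (· < c) = i + 1 := by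
      rw [List.countP_eq_length.2 fun a ha => ?_, List.length_take_of_le hi]
      obtain ⟨j, hj, rfl⟩ := List.mem_take_iff_getElem.1 ha
      simpa using (mono (by omega) hi).trans_lt hlt
    have : (l.take (i + 1)).countP (· < c) ≤ l.countP (· < c) := by
      conv_rhs => rw [← List.take_append_drop (i + 1) l, List.countP_append]
      exact Nat.le_add_right _ _
    omega

theorem List.countP_ofFn {α : Type*} {n : ℕ} (f : Fin n → α) (p : α → Prop)
    [DecidablePred p] :
    (List.ofFn f).countP (fun x => decide (p x)) = #{i | p (f i)} := by
  induction n with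
  | zero => simp
  | succ n ih =>
    rw [List.ofFn_succ, List.countP_cons, ih, Fin.card_filter_univ_succ']
    simp [add_comm]

theorem le_kthSmallest_iff {n : ℕ} (v : Fin n → ℝ) (c : ℝ) {k : ℕ} (hk1 : 1 ≤ k)
    (hkn : k ≤ n) :
    c ≤ kthSmallest v k ↔ #{i | v i < c} < k := by
  set l := (List.ofFn v).insertionSort (· ≤ ·)
  have hperm : l.Perm (List.ofFn v) := List.perm_insertionSort _ _
  have hidx : k - 1 < l.length := by rw [hperm.length_eq, List.length_ofFn]; omega
  rw [kthSmallest, List.getD_eq_getElem l 0 hidx,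
    (List.pairwise_insertionSort _ _).le_getElem_iff_countP_lt_le c hidx,
    hperm.countP_eq, List.countP_ofFn v (· < c)]
  omega

def entryRank {ι α : Type*} [Fintype ι] [LinearOrder α] (v : ι → α) (j : ι) : ℕ :=
  #{i | v i ≤ v j}

section Rank

variable {ι α : Type*} [Fintype ι] [LinearOrder α] (v : ι → α)

theorem entryRank_pos (j : ι) : 0 < entryRank v j :=
  card_pos.2 ⟨j, mem_filter.2 ⟨mem_univ j, le_rfl⟩⟩

theorem entryRank_le_card (j : ι) : entryRank v j ≤ Fintype.card ι :=
  card_filter_le _ _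

theorem entryRank_lt_entryRank {j j' : ι} (h : v j < v j') : entryRank v j < entryRank v j' := by
  refine card_lt_card ⟨fun i hi => ?_, fun hsub => ?_⟩
  · simp only [mem_filter, mem_univ, true_and] at hi ⊢
    exact hi.trans h.le
  · exact h.not_ge (by simpa using hsub (mem_filter.2 ⟨mem_univ j', le_rfl⟩))

theorem entryRank_injective {v : ι → α} (hv : Injective v) : Injective (entryRank v) := by
  intro j j' h
  rcases lt_trichotomy (v j) (v j') with hlt | heq | hgt
  · exact absurd h (entryRank_lt_entryRank v hlt).ne
  · exact hv heq
  · exact absurd h (entryRank_lt_entryRank v hgt).ne'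

theorem exists_entryRank_eq {v : ι → α} (hv : Injective v) {r : ℕ}
    (hr : r ∈ Icc 1 (Fintype.card ι)) : ∃ j, entryRank v j = r := by
  obtain ⟨j, -, hj⟩ := surj_on_of_inj_on_of_card_le (s := univ) (fun j _ => entryRank v j)
    (fun j _ => mem_Icc.2 ⟨entryRank_pos v j, entryRank_le_card v j⟩)
    (fun _ _ _ _ h => entryRank_injective hv h) (by simp) r hr
  exact ⟨j, hj.symm⟩

theorem entryRank_comp_perm (σ : Equiv.Perm ι) (j : ι) :
    entryRank (v ∘ σ) j = entryRank v (σ j) := by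
  simp only [entryRank, card_filter, comp_apply]
  exact Equiv.sum_comp σ (fun i => if v i ≤ v (σ j) then 1 else 0)

end Rank

theorem entryRank_last_eq {α : Type*} [LinearOrder α] {n : ℕ} {v : Fin (n + 1) → α}
    (hv : Injective v) :
    entryRank v (Fin.last n) = #{i : Fin n | v i.castSucc < v (Fin.last n)} + 1 := by
  simp only [entryRank, card_filter, Fin.sum_univ_castSucc, le_refl, if_true]
  congr 2 with i
  simp [le_iff_lt_or_eq, hv.eq_iff, Fin.castSucc_ne_last]

theorem le_kthSmallest_iff_entryRank_le {n : ℕ} {v : Fin (n + 1) → ℝ} (hv : Injective v)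
    {k : ℕ} (hk1 : 1 ≤ k) (hkn : k ≤ n) :
    v (Fin.last n) ≤ kthSmallest (fun i : Fin n => v i.castSucc) k ↔
      entryRank v (Fin.last n) ≤ k := by
  rw [le_kthSmallest_iff _ _ hk1 hkn, entryRank_last_eq hv]
  omega

section Exchangeable

variable {Ω ι α : Type*} [MeasurableSpace Ω] {ℙ : Measure Ω} [Fintype ι] [LinearOrder α]
  [MeasurableSpace α] [TopologicalSpace α] [OpensMeasurableSpace α] [OrderClosedTopology α]
  [SecondCountableTopology α] {X : Ω → ι → α}

def Exchangeable (ℙ : Measure Ω) (X : Ω → ι → α) : Prop :=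
  ∀ σ : Equiv.Perm ι, ℙ.map X = ℙ.map (fun ω => X ω ∘ σ)

theorem measurable_entryRank (j : ι) : Measurable fun v : ι → α => entryRank v j := by
  simp only [entryRank, card_filter]
  exact Finset.measurable_sum _ fun i _ => Measurable.ite
    (measurableSet_le (measurable_pi_apply i) (measurable_pi_apply j))
    measurable_const measurable_const

theorem measurableSet_entryRank_eq (hX : Measurable X) (j : ι) (r : ℕ) :
    MeasurableSet {ω | entryRank (X ω) j = r} :=
  (measurable_entryRank j).comp hX (measurableSet_singleton r)

theorem measure_entryRank_eq_independent_of_index (hX : Measurable X)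
    (hexch : Exchangeable ℙ X) (j j' : ι) (r : ℕ) :
    ℙ {ω | entryRank (X ω) j = r} = ℙ {ω | entryRank (X ω) j' = r} := by
  classical
  set σ := Equiv.swap j j'
  have hXσ : Measurable fun ω => X ω ∘ σ :=
    measurable_pi_lambda _ fun i => (measurable_pi_apply (σ i)).comp hX
  have hA : MeasurableSet {v : ι → α | entryRank v j = r} :=
    measurable_entryRank j (measurableSet_singleton r)
  have hpre :
      (fun ω => X ω ∘ σ) ⁻¹' {v | entryRank v j = r} = {ω | entryRank (X ω) j' = r} := by
    ext ω
    simp [entryRank_comp_perm, σ]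
  rw [← hpre, ← Measure.map_apply hXσ hA, ← hexch σ, Measure.map_apply hX hA]
  rfl

theorem measure_entryRank_eq [IsProbabilityMeasure ℙ] (hX : Measurable X)
    (hexch : Exchangeable ℙ X) (hinj : ∀ᵐ ω ∂ℙ, Injective (X ω)) (j : ι) {r : ℕ}
    (hr : r ∈ Icc 1 (Fintype.card ι)) :
    ℙ {ω | entryRank (X ω) j = r} = (Fintype.card ι : ℝ≥0∞)⁻¹ := by
  -- Almost surely exactly one index has rank `r`, and each does with the same probability.
  have hnull : ℙ {ω | ¬Injective (X ω)} = 0 := ae_iff.1 hinj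
  have hdisj : ((univ : Finset ι) : Set ι).Pairwise
      (AEDisjoint ℙ on fun i => {ω | entryRank (X ω) i = r}) := by
    refine fun i _ i' _ hne => measure_mono_null ?_ hnull
    rintro ω ⟨hi, hi'⟩ hω
    exact hne (entryRank_injective hω (hi.trans hi'.symm))
  have hcover : ℙ (⋃ i ∈ univ, {ω | entryRank (X ω) i = r}) = 1 := by
    refine (measure_congr (ae_eq_univ.2 (measure_mono_null (fun ω hω hinjω => ?_) hnull))).trans
      measure_univ
    obtain ⟨i, hi⟩ := exists_entryRank_eq hinjω hr
    exact hω (Set.mem_biUnion (mem_univ i) hi)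
  rw [measure_biUnion_finset₀ hdisj fun i _ =>
    (measurableSet_entryRank_eq hX i r).nullMeasurableSet] at hcover
  simp only [measure_entryRank_eq_independent_of_index hX hexch _ j r, sum_const, card_univ,
    nsmul_eq_mul] at hcover
  exact ENNReal.eq_inv_of_mul_eq_one_left ((mul_comm _ _).trans hcover)

theorem measure_entryRank_le [IsProbabilityMeasure ℙ] (hX : Measurable X)
    (hexch : Exchangeable ℙ X) (hinj : ∀ᵐ ω ∂ℙ, Injective (X ω)) (j : ι) {k : ℕ}
    (hk : k ≤ Fintype.card ι) :
    ℙ {ω | entryRank (X ω) j ≤ k} = k / Fintype.card ι := by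
  have hunion :
      {ω | entryRank (X ω) j ≤ k} = ⋃ r ∈ Icc 1 k, {ω | entryRank (X ω) j = r} := by
    ext ω
    simp [Nat.one_le_iff_ne_zero, (entryRank_pos (X ω) j).ne']
  have hdisj : ((Icc 1 k : Finset ℕ) : Set ℕ).PairwiseDisjoint
      fun r => {ω | entryRank (X ω) j = r} :=
    fun r _ r' _ hne => Set.disjoint_left.2 fun ω h h' => hne (h.symm.trans h')
  rw [hunion, measure_biUnion_finset hdisj fun r _ => measurableSet_entryRank_eq hX j r,
    sum_congr rfl fun r hr => measure_entryRank_eq hX hexch hinj j (Icc_subset_Icc_right hk hr)]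
  simp [div_eq_mul_inv]

end Exchangeable

/-- conformal coverage upper bound. In the setting of the coverage lower bound,
if additionally the scores `s_1, …, s_{n+1}` are almost surely distinct, then
`P(s_{n+1} ≤ τ*) ≤ 1 - α + 1/(n+1)`. -/
theorem conformal_coverage_upper_bound {Ω : Type*} [MeasurableSpace Ω]
    (ℙ : Measure Ω) [IsProbabilityMeasure ℙ]
    (n : ℕ) (α : ℝ) (hα : α ∈ Set.Ioo (0 : ℝ) 1)
    (s : Fin (n + 1) → Ω → ℝ) (hmeas : ∀ i, Measurable (s i))
    (hexch : ∀ σ : Equiv.Perm (Fin (n + 1)),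
      Measure.map (fun ω => fun i => s i ω) ℙ = Measure.map (fun ω => fun i => s (σ i) ω) ℙ)
    (hn : (1 - α) * (n + 1) ≤ n)
    (hdistinct : ∀ᵐ ω ∂ℙ, ∀ i j : Fin (n + 1), i ≠ j → s i ω ≠ s j ω) :
    ℙ {ω | s (Fin.last n) ω ≤
        kthSmallest (fun i : Fin n => s i.castSucc ω) (Nat.ceil ((1 - α) * (n + 1)))}
      ≤ ENNReal.ofReal (1 - α + 1 / (n + 1)) := by
  set k := Nat.ceil ((1 - α) * (n + 1))
  have hpos : 0 < (1 - α) * (n + 1) := mul_pos (by linarith [hα.2]) (by positivity)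
  have hk1 : 1 ≤ k := Nat.one_le_ceil_iff.2 hpos
  have hkn : k ≤ n := Nat.ceil_le.2 hn
  have hinj : ∀ᵐ ω ∂ℙ, Injective fun i => s i ω :=
    hdistinct.mono fun ω h i j hij => by_contra fun hne => h i j hne hij
  have hevent : {ω | s (Fin.last n) ω ≤ kthSmallest (fun i : Fin n => s i.castSucc ω) k}
      =ᵐ[ℙ] {ω | entryRank (fun i => s i ω) (Fin.last n) ≤ k} :=
    Filter.eventuallyEq_set.2 (hinj.mono fun ω hω => le_kthSmallest_iff_entryRank_le hω hk1 hkn)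
  rw [measure_congr hevent, measure_entryRank_le (measurable_pi_lambda _ hmeas) hexch hinj _
    (by rw [Fintype.card_fin]; omega), Fintype.card_fin, ← ENNReal.ofReal_natCast,
    ← ENNReal.ofReal_natCast, ← ENNReal.ofReal_div_of_pos (by positivity)]
  refine ENNReal.ofReal_le_ofReal ((div_le_iff₀ (by positivity)).2 ?_)
  have hceil : (k : ℝ) < (1 - α) * (n + 1) + 1 := Nat.ceil_lt_add_one hpos.le
  push_cast
  field_simp
  linarith
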